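/- For every monoid M, exactly one of the following holds: (1) the set J(M) = {a ∈ M : ∃ b, c ∈ M, b·a·c = 1} is a subgroup of M, i.e. it is a submonoid of M in which every element has a two-sided inverse lying in J(M); (2) M contains a submonoid isomorphic to the bicyclic monoid B. Moreover, (2) holds if and only if there exist x, y ∈ M with x·y = 1 and y·x ≠ 1. -/

import Mathlib

/-!
In a Dedekind-finite monoid (one-sided inverses are two-sided) `J(M)` is the group of units:
`b * a * c = 1` makes `b * a`, and then `a`, a unit. Conversely, if `J(M)` is a group and
`a * b = 1`, then `b ∈ J(M)` has a two-sided inverse, which must be `a`.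

If `a * b = 1 ≠ b * a`, the elements `b ^ m * a ^ n` are pairwise distinct: an equality
between two of them yields `b ^ d * a ^ e = 1` with `d + e > 0`, giving `b` a right inverse
or `a` a left inverse, and either forces `b * a = 1`. Hence `x ↦ a`, `x̄ ↦ b` is injective on
the normal forms `x̄ ^ m * x ^ n` of the bicyclic monoid. The bicyclic monoid itself is not
Dedekind-finite, as its action on `ℕ` by predecessor and successor shows.
-/

namespace Paper

/-- Defining relation of the bicyclic monoid: the word `x·x̄` is identified with the
empty word. The generator `x` is `FreeMonoid.of 0`, and `x̄` is `FreeMonoid.of 1`. -/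
def BicyclicRel : FreeMonoid (Fin 2) → FreeMonoid (Fin 2) → Prop :=
  fun a b => a = FreeMonoid.of 0 * FreeMonoid.of 1 ∧ b = 1

/-- The bicyclic monoid `B`: the quotient of the free monoid on two generators by the
smallest monoid congruence identifying `x·x̄` with the empty word. -/
def Bicyclic : Type := (conGen BicyclicRel).Quotient

instance : Monoid Bicyclic := inferInstanceAs (Monoid (conGen BicyclicRel).Quotient)

/-- `J(M) = {a ∈ M : ∃ b c, b·a·c = 1}`. -/
def Jset (M : Type*) [Monoid M] : Set M := {a | ∃ b c : M, b * a * c = 1}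

section PowMulPow

variable {M : Type*} [Monoid M] {a b : M}

theorem eq_zero_of_pow_mul_pow_eq_one (hab : a * b = 1) (hba : b * a ≠ 1) {m n : ℕ}
    (h : b ^ m * a ^ n = 1) : m = 0 ∧ n = 0 := by
  have hm : m = 0 := by
    rcases m with _ | m
    · rfl
    have h' : b * (b ^ m * a ^ n) = 1 := by rwa [← mul_assoc, ← pow_succ']
    exact absurd (by rwa [← left_inv_eq_right_inv hab h'] at h') hba
  subst hm
  rcases n with _ | n
  · exact ⟨rfl, rfl⟩
  have h' : a ^ n * a = 1 := by rwa [pow_zero, one_mul, pow_succ] at h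
  exact absurd (by rwa [left_inv_eq_right_inv h' hab] at h') hba

theorem eq_of_pow_eq_pow_mul_pow (hab : a * b = 1) (hba : b * a ≠ 1) {n n' d : ℕ}
    (h : a ^ n = b ^ d * a ^ n') : d = 0 ∧ n = n' := by
  rcases le_total n' n with hle | hle
  · obtain ⟨e, rfl⟩ := Nat.exists_eq_add_of_le hle
    have hae : a ^ e = b ^ d := by
      calc a ^ e = a ^ (n' + e) * b ^ n' := by
            rw [add_comm, pow_add, mul_assoc, pow_mul_pow_eq_one n' hab, mul_one]
        _ = b ^ d := by rw [h, mul_assoc, pow_mul_pow_eq_one n' hab, mul_one]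
    have hde : b ^ (d + e) * a ^ 0 = 1 := by
      rw [pow_zero, mul_one, pow_add, ← hae, pow_mul_pow_eq_one e hab]
    obtain ⟨hde, -⟩ := eq_zero_of_pow_mul_pow_eq_one hab hba hde
    omega
  · obtain ⟨e, rfl⟩ := Nat.exists_eq_add_of_le hle
    have hde : b ^ d * a ^ e = 1 := by
      calc b ^ d * a ^ e = b ^ d * a ^ (n + e) * b ^ n := by
            rw [add_comm, pow_add, mul_assoc, mul_assoc, pow_mul_pow_eq_one n hab, mul_one]
        _ = 1 := by rw [← h, pow_mul_pow_eq_one n hab]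
    obtain ⟨rfl, rfl⟩ := eq_zero_of_pow_mul_pow_eq_one hab hba hde
    exact ⟨rfl, rfl⟩

theorem eq_of_pow_mul_pow_eq_pow_mul_pow (hab : a * b = 1) (hba : b * a ≠ 1)
    {m n m' n' : ℕ} (h : b ^ m * a ^ n = b ^ m' * a ^ n') : m = m' ∧ n = n' := by
  wlog hle : m ≤ m' generalizing m n m' n'
  · obtain ⟨rfl, rfl⟩ := this h.symm (le_of_not_ge hle)
    exact ⟨rfl, rfl⟩
  obtain ⟨d, rfl⟩ := Nat.exists_eq_add_of_le hle
  have hn : a ^ n = b ^ d * a ^ n' := by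
    calc a ^ n = a ^ m * (b ^ m * a ^ n) := by
          rw [← mul_assoc, pow_mul_pow_eq_one m hab, one_mul]
      _ = b ^ d * a ^ n' := by
          rw [h, pow_add, ← mul_assoc, ← mul_assoc, pow_mul_pow_eq_one m hab, one_mul]
  obtain ⟨rfl, rfl⟩ := eq_of_pow_eq_pow_mul_pow hab hba hn
  exact ⟨rfl, rfl⟩

end PowMulPow

namespace Bicyclic

def mk : FreeMonoid (Fin 2) →* Bicyclic := (conGen BicyclicRel).mk'

def x : Bicyclic := mk (FreeMonoid.of 0)

def xbar : Bicyclic := mk (FreeMonoid.of 1)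

theorem x_mul_xbar : x * xbar = 1 :=
  (Con.eq _).mpr (ConGen.Rel.of _ _ ⟨rfl, rfl⟩)

variable {M : Type*} [Monoid M] {a b : M}

def lift (a b : M) (hab : a * b = 1) : Bicyclic →* M :=
  Con.lift _ (FreeMonoid.lift ![a, b]) <| Con.conGen_le.mpr <| by
    rintro _ _ ⟨rfl, rfl⟩
    simp [hab]

theorem lift_mk (hab : a * b = 1) (w : FreeMonoid (Fin 2)) :
    lift a b hab (mk w) = FreeMonoid.lift ![a, b] w :=
  rfl

@[simp]
theorem lift_x (hab : a * b = 1) : lift a b hab x = a := by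
  simp [x, lift_mk]

@[simp]
theorem lift_xbar (hab : a * b = 1) : lift a b hab xbar = b := by
  simp [xbar, lift_mk]

theorem xbar_mul_x_ne_one : xbar * x ≠ 1 := by
  intro h
  let pred : Function.End ℕ := Nat.pred
  let succ : Function.End ℕ := Nat.succ
  have h' := congrArg (lift pred succ rfl) h
  rw [map_mul, map_one, lift_x, lift_xbar] at h'
  exact Nat.succ_ne_zero _ (congrFun h' 0)

theorem not_isDedekindFiniteMonoid : ¬ IsDedekindFiniteMonoid Bicyclic :=
  fun _ => xbar_mul_x_ne_one (mul_eq_one_symm x_mul_xbar)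

theorem exists_xbar_pow_mul_x_pow_eq (u : Bicyclic) : ∃ m n : ℕ, xbar ^ m * x ^ n = u := by
  induction u using Con.induction_on with | H w => ?_
  change ∃ m n : ℕ, xbar ^ m * x ^ n = mk w
  induction w using FreeMonoid.recOn with
  | one => exact ⟨0, 0, by simp⟩
  | of_mul i w ih =>
    obtain ⟨m, n, hmn⟩ := ih
    have hi : mk (FreeMonoid.of i) = x ∨ mk (FreeMonoid.of i) = xbar := by
      fin_cases i
      exacts [Or.inl rfl, Or.inr rfl]
    rw [map_mul, ← hmn]
    rcases hi with hi | hi <;> rw [hi]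
    · rcases m with _ | m
      · exact ⟨0, n + 1, by simp only [pow_zero, one_mul, pow_succ']⟩
      · exact ⟨m, n, by rw [pow_succ', mul_assoc, ← mul_assoc x, x_mul_xbar, one_mul]⟩
    · exact ⟨m + 1, n, by rw [pow_succ', mul_assoc]⟩

theorem lift_injective (hab : a * b = 1) (hba : b * a ≠ 1) :
    Function.Injective (lift a b hab) := by
  intro u v huv
  obtain ⟨m, n, rfl⟩ := exists_xbar_pow_mul_x_pow_eq u
  obtain ⟨m', n', rfl⟩ := exists_xbar_pow_mul_x_pow_eq v
  simp only [map_mul, map_pow, lift_x, lift_xbar] at huv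
  obtain ⟨rfl, rfl⟩ := eq_of_pow_mul_pow_eq_pow_mul_pow hab hba huv
  rfl

end Bicyclic

section DedekindFinite

variable {M : Type*} [Monoid M]

theorem exists_submonoid_mulEquiv_bicyclic_iff :
    (∃ N : Submonoid M, Nonempty (N ≃* Bicyclic)) ↔ ¬ IsDedekindFiniteMonoid M := by
  constructor
  · rintro ⟨N, ⟨e⟩⟩ _
    exact Bicyclic.not_isDedekindFiniteMonoid (.of_injective e.symm e.symm.injective)
  · intro hM
    obtain ⟨a, b, hab, hba⟩ : ∃ a b : M, a * b = 1 ∧ b * a ≠ 1 := by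
      simpa [isDedekindFiniteMonoid_iff] using hM
    have hf := Bicyclic.lift_injective hab hba
    exact ⟨_, ⟨(Submonoid.equivMapOfInjective ⊤ _ hf).symm.trans Submonoid.topEquiv⟩⟩

theorem jset_eq_setOf_isUnit [IsDedekindFiniteMonoid M] : Jset M = {a | IsUnit a} := by
  ext a
  constructor
  · rintro ⟨b, c, h⟩
    exact isUnit_of_mul_isUnit_right (isUnit_of_mul_isUnit_left (h ▸ isUnit_one))
  · rintro ⟨u, rfl⟩
    exact ⟨↑u⁻¹, 1, by simp⟩

theorem jset_isGroup_iff_isDedekindFiniteMonoid :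
    ((∃ N : Submonoid M, (N : Set M) = Jset M) ∧
      ∀ a ∈ Jset M, ∃ b ∈ Jset M, a * b = 1 ∧ b * a = 1) ↔
      IsDedekindFiniteMonoid M := by
  constructor
  · rintro ⟨-, hinv⟩
    refine ⟨fun {a b} hab => ?_⟩
    obtain ⟨c, -, hbc, -⟩ := hinv b ⟨a, 1, by rw [mul_one, hab]⟩
    rwa [left_inv_eq_right_inv hab hbc]
  · intro
    rw [jset_eq_setOf_isUnit]
    refine ⟨⟨IsUnit.submonoid M, rfl⟩, ?_⟩
    rintro _ ⟨u, rfl⟩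
    exact ⟨↑u⁻¹, u⁻¹.isUnit, u.mul_inv, u.inv_mul⟩

end DedekindFinite

/-- For every monoid `M`, exactly one of the following holds:
(1) `J(M)` is a subgroup of `M` (a submonoid in which every element has a two-sided
inverse lying in `J(M)`); (2) `M` contains a submonoid isomorphic to the bicyclic
monoid. Moreover, (2) holds iff there are `x, y ∈ M` with `x·y = 1` and `y·x ≠ 1`. -/
theorem stmt1 (M : Type*) [Monoid M] :
    Xor'
      ((∃ N : Submonoid M, (N : Set M) = Jset M) ∧
        ∀ a ∈ Jset M, ∃ b ∈ Jset M, a * b = 1 ∧ b * a = 1)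
      (∃ N : Submonoid M, Nonempty (N ≃* Bicyclic)) ∧
    ((∃ N : Submonoid M, Nonempty (N ≃* Bicyclic)) ↔
      ∃ x y : M, x * y = 1 ∧ y * x ≠ 1) := by
  rw [exists_submonoid_mulEquiv_bicyclic_iff, jset_isGroup_iff_isDedekindFiniteMonoid]
  exact ⟨xor_not_right.mpr Iff.rfl, by simp [isDedekindFiniteMonoid_iff]⟩

end Paper
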